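/- arXiv:2103.02700 — 5 statements merged into one kernel-verified Lean document; each statement's English description precedes it below -/
import Mathlib

section
/- The two-sided ideal generated by X^{q^m} - X in the ring of q-polynomials over F_{q^m} (with addition and composition) equals the kernel of the canonical ring homomorphism from q-polynomials to Hom_{F_q}(F_{q^m}, F_{q^m}) given by evaluation, inducing a ring isomorphism of the quotient with End_{F_q}(F_{q^m}). -/
open Polynomial

/-- A q-polynomial: a polynomial whose support consists only of q-th powers of `X`. -/
def IsQPoly (q : ℕ) {L : Type*} [Semiring L] (P : Polynomial L) : Prop :=
  ∀ n ∈ P.support, ∃ i : ℕ, n = q ^ i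

section Aux

variable {K L : Type*} [Field K] [Field L] [Algebra K L] [Fintype K]

lemma aux_frob_add (i : ℕ) (x y : L) :
    (x + y) ^ Fintype.card K ^ i = x ^ Fintype.card K ^ i + y ^ Fintype.card K ^ i := by
  set p := ringChar K with hp
  haveI : CharP K p := ringChar.charP K
  haveI hF : Fact p.Prime := ⟨CharP.char_is_prime K p⟩
  haveI : CharP L p := charP_of_injective_algebraMap (algebraMap K L).injective p
  obtain ⟨n, -, hcard⟩ := FiniteField.card K p
  rw [hcard, ← pow_mul]
  exact add_pow_char_pow x y p (↑n * i)

lemma aux_frob_smul (i : ℕ) (a : K) (x : L) :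
    (a • x) ^ Fintype.card K ^ i = a • x ^ Fintype.card K ^ i := by
  rw [Algebra.smul_def, Algebra.smul_def, mul_pow, ← map_pow, FiniteField.pow_card_pow]

/-- The `i`-th Frobenius power as a `K`-linear endomorphism of `L`. -/
noncomputable def frobPow (K : Type*) {L : Type*} [Field K] [Field L] [Algebra K L]
    [Fintype K] (i : ℕ) : L →ₗ[K] L where
  toFun x := x ^ Fintype.card K ^ i
  map_add' x y := aux_frob_add i x y
  map_smul' a x := aux_frob_smul i a x

@[simp] lemma frobPow_apply (i : ℕ) (x : L) :
    frobPow K i x = x ^ Fintype.card K ^ i := rfl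

/-- Distinct Frobenius powers are distinct. -/
lemma aux_pow_inj {L : Type*} [Field L] [Fintype L] {q m : ℕ} (hq : 1 < q)
    (hcard : Fintype.card L = q ^ m) {i j : Fin m}
    (h : ∀ x : L, x ^ q ^ (i : ℕ) = x ^ q ^ (j : ℕ)) : i = j := by
  by_contra hne
  have hne' : (i : ℕ) ≠ (j : ℕ) := fun h' => hne (Fin.ext h')
  have hi := i.isLt
  have hj := j.isLt
  have hm2 : 2 ≤ m := by omega
  obtain ⟨g, hg⟩ := IsCyclic.exists_generator (α := Lˣ)
  have horder : orderOf g = q ^ m - 1 := by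
    rw [orderOf_eq_card_of_forall_mem_zpowers hg, Nat.card_units, Nat.card_eq_fintype_card, hcard]
  have hgeq : g ^ q ^ (i : ℕ) = g ^ q ^ (j : ℕ) := by
    apply Units.ext
    rw [Units.val_pow_eq_pow_val, Units.val_pow_eq_pow_val]
    exact h g
  have hmod : q ^ (i : ℕ) ≡ q ^ (j : ℕ) [MOD q ^ m - 1] := by
    rw [← horder]; exact pow_eq_pow_iff_modEq.mp hgeq
  have hbound : ∀ k : Fin m, q ^ (k : ℕ) < q ^ m - 1 := by
    intro k
    have h1 : q ^ (k : ℕ) ≤ q ^ (m - 1) := Nat.pow_le_pow_right (by omega) (by omega)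
    have h2 : 2 ≤ q ^ (m - 1) := le_trans hq (Nat.le_self_pow (by omega) q)
    have h3 : q ^ (m - 1) * 2 ≤ q ^ (m - 1) * q := Nat.mul_le_mul_left _ hq
    have h4 : q ^ m = q ^ (m - 1) * q := by
      rw [← pow_succ]; congr 1; omega
    omega
  have hmod' : q ^ (i : ℕ) % (q ^ m - 1) = q ^ (j : ℕ) % (q ^ m - 1) := hmod
  rw [Nat.mod_eq_of_lt (hbound i), Nat.mod_eq_of_lt (hbound j)] at hmod'
  exact hne' (Nat.pow_right_injective hq hmod')

/-- Linear independence of Frobenius powers. -/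
lemma aux_indep {L : Type*} [Field L] [Fintype L] {q m : ℕ} (hq : 1 < q)
    (hcard : Fintype.card L = q ^ m) (c : Fin m → L)
    (h : ∀ x : L, ∑ i : Fin m, c i * x ^ q ^ (i : ℕ) = 0) : c = 0 := by
  classical
  have hinj : Function.Injective (fun i : Fin m => powMonoidHom (α := L) (q ^ (i : ℕ))) := by
    intro i j hij
    apply aux_pow_inj hq hcard
    intro x
    exact DFunLike.congr_fun hij x
  have li := (linearIndependent_monoidHom L L).comp _ hinj
  have key := Fintype.linearIndependent_iff.mp li c ?_
  · funext i; exact key i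
  · funext x
    have := h x
    simpa [Function.comp, powMonoidHom] using this

/-- The evaluation map `(Fin m → L) →ₗ[K] (L →ₗ[K] L)` sending coefficients to the
corresponding linearized polynomial map. -/
noncomputable def theta (K L : Type*) [Field K] [Field L] [Algebra K L] [Fintype K]
    (m : ℕ) : (Fin m → L) →ₗ[K] (L →ₗ[K] L) where
  toFun c := ∑ i : Fin m, c i • frobPow K (i : ℕ)
  map_add' c d := by
    apply LinearMap.ext; intro x
    simp [add_smul, Finset.sum_add_distrib]
  map_smul' a c := by
    apply LinearMap.ext; intro x
    simp [smul_assoc, Finset.smul_sum]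

lemma theta_apply {K L : Type*} [Field K] [Field L] [Algebra K L] [Fintype K]
    {m : ℕ} (c : Fin m → L) (x : L) :
    theta K L m c x = ∑ i : Fin m, c i * x ^ Fintype.card K ^ (i : ℕ) := by
  simp [theta, smul_eq_mul]

lemma aux_surj {K L : Type*} [Field K] [Field L] [Algebra K L] [Fintype K]
    [FiniteDimensional K L] [Fintype L] {q m : ℕ} (hq' : Fintype.card K = q) (hq : 1 < q)
    (hcard : Fintype.card L = q ^ m) (hm : Module.finrank K L = m) (f : L →ₗ[K] L) :
    ∃ c : Fin m → L, ∀ x : L, ∑ i : Fin m, c i * x ^ q ^ (i : ℕ) = f x := by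
  have hinj : Function.Injective (theta K L m) := by
    rw [← LinearMap.ker_eq_bot, LinearMap.ker_eq_bot']
    intro c hc
    apply aux_indep hq hcard
    intro x
    have hx := LinearMap.congr_fun hc x
    rw [theta_apply, hq'] at hx
    simpa using hx
  have hdim : Module.finrank K (Fin m → L) = Module.finrank K (L →ₗ[K] L) := by
    rw [Module.finrank_linearMap, Module.finrank_pi_fintype, hm]
    simp [hm, Finset.sum_const, mul_comm]
  have hsurj := (LinearMap.injective_iff_surjective_of_finrank_eq_finrank hdim).mp hinj
  obtain ⟨c, hc⟩ := hsurj f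
  refine ⟨c, fun x => ?_⟩
  have hx := LinearMap.congr_fun hc x
  rw [theta_apply, hq'] at hx
  exact hx

end Aux

/-- The two-sided ideal generated by `X^{q^m} - X` in the ring of q-polynomials
(with addition and composition) equals the kernel of the evaluation map to
`End_{F_q}(F_{q^m})`; moreover evaluation is surjective onto the `F_q`-linear
endomorphisms, inducing a ring isomorphism of the quotient with `End_{F_q}(F_{q^m})`. -/
theorem stmt_2 (q m : ℕ) (hm : 0 < m)
    (K L : Type*) [Field K] [Field L] [Algebra K L] [Fintype K] [FiniteDimensional K L]
    (hq : Fintype.card K = q) (hm' : Module.finrank K L = m) :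
    (∀ P : Polynomial L, IsQPoly q P →
      ((∀ x : L, P.eval x = 0) ↔
        P ∈ AddSubgroup.closure {R : Polynomial L | ∃ A B : Polynomial L,
          IsQPoly q A ∧ IsQPoly q B ∧ R = A.comp (Polynomial.comp (X ^ q ^ m - X) B)}))
    ∧ (∀ f : L →ₗ[K] L, ∃ P : Polynomial L, IsQPoly q P ∧ ∀ x : L, P.eval x = f x) := by
  classical
  have hq1 : 1 < q := hq ▸ Fintype.one_lt_card
  have hq0 : 0 < q := by omega
  haveI : Finite L := Module.finite_of_finite K
  haveI : Fintype L := Fintype.ofFinite L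
  have hcard : Fintype.card L = q ^ m := by
    rw [← hq, ← hm']; exact Module.card_eq_pow_finrank
  have hLpow : ∀ x : L, x ^ q ^ m = x := fun x => by
    rw [← hcard]; exact FiniteField.pow_card x
  set S := AddSubgroup.closure {R : Polynomial L | ∃ A B : Polynomial L,
      IsQPoly q A ∧ IsQPoly q B ∧ R = A.comp (Polynomial.comp (X ^ q ^ m - X) B)} with hS
  -- q-polynomials vanish at 0
  have hq0eval : ∀ A : Polynomial L, IsQPoly q A → A.eval 0 = 0 := by
    intro A hA
    rw [← coeff_zero_eq_eval_zero]
    by_contra h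
    obtain ⟨i, hi⟩ := hA 0 (mem_support_iff.mpr h)
    exact absurd hi.symm (pow_pos hq0 i).ne'
  -- elements of S vanish everywhere
  have hST : ∀ P ∈ S, ∀ x : L, P.eval x = 0 := by
    have hle : S ≤
        { carrier := {P : Polynomial L | ∀ x, P.eval x = 0}
          add_mem' := fun {a b} ha hb x => by
            simp only [Set.mem_setOf_eq] at ha hb ⊢
            simp [eval_add, ha x, hb x]
          zero_mem' := fun x => by simp
          neg_mem' := fun {a} ha x => by
            simp only [Set.mem_setOf_eq] at ha ⊢
            simp [ha x] } := by
      rw [hS]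
      apply (AddSubgroup.closure_le _).mpr
      rintro R ⟨A, B, hA, hB, rfl⟩
      intro x
      have hinner : ((X ^ q ^ m - X : Polynomial L).comp B).eval x = 0 := by
        simp [eval_comp, hLpow (B.eval x)]
      show (A.comp ((X ^ q ^ m - X : Polynomial L).comp B)).eval x = 0
      rw [eval_comp, hinner, hq0eval A hA]
    intro P hP x
    exact hle hP x
  -- monomials C a * X^{q^k} are q-polynomials
  have hqX : ∀ (a : L) (k : ℕ), IsQPoly q (C a * X ^ q ^ k) := by
    intro a k n hn
    refine ⟨k, ?_⟩
    have h1 := mem_support_iff.mp hn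
    rw [coeff_C_mul, coeff_X_pow] at h1
    by_contra h
    simp [h] at h1
  have hXq : ∀ k : ℕ, IsQPoly q ((X : Polynomial L) ^ q ^ k) := by
    intro k n hn
    refine ⟨k, ?_⟩
    have h1 := mem_support_iff.mp hn
    rw [coeff_X_pow] at h1
    by_contra h
    simp [h] at h1
  -- key generators
  have hmono : ∀ (a : L) (k : ℕ), C a * X ^ q ^ (m + k) - C a * X ^ q ^ k ∈ S := by
    intro a k
    apply AddSubgroup.subset_closure
    refine ⟨C a * X ^ q ^ 0, X ^ q ^ k, hqX a 0, hXq k, ?_⟩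
    have hexp : q ^ (m + k) = q ^ k * q ^ m := by rw [pow_add, mul_comm]
    rw [hexp, pow_mul]
    simp [mul_comp, sub_comp, pow_comp, mul_sub]
  -- reduction of a single monomial
  have hred : ∀ (i : ℕ) (a : L), ∃ c : Fin m → L,
      C a * X ^ q ^ i - (∑ j : Fin m, C (c j) * X ^ q ^ (j : ℕ)) ∈ S := by
    intro i
    induction i using Nat.strong_induction_on with
    | _ i ih =>
      intro a
      by_cases him : i < m
      · refine ⟨Pi.single ⟨i, him⟩ a, ?_⟩
        have hsum : (∑ j : Fin m, C (Pi.single (⟨i, him⟩ : Fin m) a j) * X ^ q ^ (j : ℕ))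
            = C a * X ^ q ^ i := by
          rw [Finset.sum_eq_single (⟨i, him⟩ : Fin m)]
          · simp
          · intro b _ hb
            rw [Pi.single_eq_of_ne hb]
            simp
          · intro h; exact absurd (Finset.mem_univ _) h
        rw [hsum, sub_self]
        exact zero_mem S
      · push_neg at him
        obtain ⟨c, hc⟩ := ih (i - m) (by omega) a
        refine ⟨c, ?_⟩
        have hm2 : m + (i - m) = i := by omega
        have h1 := hmono a (i - m)
        rw [hm2] at h1
        have h2 := add_mem h1 hc
        convert h2 using 1
        ring
  -- reduction of an arbitrary q-polynomial
  have hPred : ∀ P : Polynomial L, IsQPoly q P →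
      ∃ c : Fin m → L, P - (∑ j : Fin m, C (c j) * X ^ q ^ (j : ℕ)) ∈ S := by
    intro P hP
    have key : ∀ s : Finset ℕ, (∀ n ∈ s, ∃ i : ℕ, n = q ^ i) →
        ∃ c : Fin m → L, (∑ n ∈ s, C (P.coeff n) * X ^ n)
          - (∑ j : Fin m, C (c j) * X ^ q ^ (j : ℕ)) ∈ S := by
      intro s
      induction s using Finset.induction_on with
      | empty => intro _; exact ⟨0, by simpa using zero_mem S⟩
      | @insert n s hns ih =>
        intro hmem
        obtain ⟨i, hi⟩ := hmem n (Finset.mem_insert_self n s)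
        obtain ⟨c1, hc1⟩ := hred i (P.coeff n)
        rw [← hi] at hc1
        obtain ⟨c2, hc2⟩ := ih (fun k hk => hmem k (Finset.mem_insert_of_mem hk))
        refine ⟨c1 + c2, ?_⟩
        rw [Finset.sum_insert hns]
        have hsum : (∑ j : Fin m, C ((c1 + c2) j) * X ^ q ^ (j : ℕ))
            = (∑ j : Fin m, C (c1 j) * X ^ q ^ (j : ℕ))
              + (∑ j : Fin m, C (c2 j) * X ^ q ^ (j : ℕ)) := by
          rw [← Finset.sum_add_distrib]
          apply Finset.sum_congr rfl
          intro j _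
          simp [add_mul]
        rw [hsum]
        have h2 := add_mem hc1 hc2
        convert h2 using 1
        ring
    obtain ⟨c, hc⟩ := key P.support hP
    exact ⟨c, by rwa [← as_sum_support_C_mul_X_pow P] at hc⟩
  constructor
  · intro P hP
    constructor
    · intro hev
      obtain ⟨c, hc⟩ := hPred P hP
      have hRz : ∀ x : L, (∑ j : Fin m, C (c j) * X ^ q ^ (j : ℕ)).eval x = 0 := by
        intro x
        have h2 := hST _ hc x
        rw [eval_sub, hev x, zero_sub, neg_eq_zero] at h2
        exact h2
      have hc0 : c = 0 := by
        apply aux_indep hq1 hcard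
        intro x
        have := hRz x
        simpa [eval_finset_sum] using this
      rw [hc0] at hc
      simpa using hc
    · intro hmem x
      exact hST P hmem x
  · intro f
    obtain ⟨c, hc⟩ := aux_surj hq hq1 hcard hm' f
    refine ⟨∑ j : Fin m, C (c j) * X ^ q ^ (j : ℕ), ?_, ?_⟩
    · intro n hn
      by_contra hcon
      push_neg at hcon
      apply mem_support_iff.mp hn
      rw [finset_sum_coeff]
      apply Finset.sum_eq_zero
      intro j _
      rw [coeff_C_mul, coeff_X_pow, if_neg (hcon (j : ℕ)), mul_zero]
    · intro x
      rw [eval_finset_sum]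
      simpa using hc x
end

section
/- The adjunction on q-polynomials modulo (X^{q^m}-X) is anti-multiplicative: for all q-polynomials P, Q, one has (P ∘ Q)^* = Q^* ∘ P^* modulo (X^{q^m}-X). -/
/-!
Writing `Tr` for the trace of `L/K` with `q = #K` and `m = [L : K]`, the map `x ↦ x ^ q` is a
`K`-automorphism of `L`, so `Tr (z ^ q ^ k) = Tr z`. Since `y ^ q ^ m = y`, the `i`-th term of
`Tr (P^*(x) y)` is the `q ^ (m - i)`-th power of the `i`-th term of `Tr (x P(y))`. Hence
`Tr (P^*(x) y) = Tr (x P(y))`, and `Tr ((P ∘ Q)^*(x) y) = Tr (x P(Q(y))) = Tr (Q^*(P^*(x)) y)` for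
all `y`; the trace form being nondegenerate, `(P ∘ Q)^* = Q^* ∘ P^*`.
-/

/-- Evaluation of the q-polynomial with coefficient vector `p` (q-degree `< m`). -/
def qEval (q : ℕ) {m : ℕ} {L : Type*} [Field L] (p : Fin m → L) (x : L) : L :=
  ∑ i : Fin m, p i * x ^ q ^ (i : ℕ)

/-- Evaluation of the adjoint `P^* = ∑ p_i^{q^{m-i}} X^{q^{m-i}}` (indices mod `m`). -/
def qAdjEval (q : ℕ) {m : ℕ} {L : Type*} [Field L] (p : Fin m → L) (x : L) : L :=
  ∑ i : Fin m, (p i) ^ q ^ ((m - (i : ℕ)) % m) * x ^ q ^ ((m - (i : ℕ)) % m)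

open FiniteField

section FiniteExtension

variable {K L : Type*} [Field K] [Fintype K] [Field L] [Algebra K L] [FiniteDimensional K L]

theorem trace_pow_card_pow (k : ℕ) (z : L) :
    Algebra.trace K L (z ^ Fintype.card K ^ k) = Algebra.trace K L z := by
  rw [← congrFun (coe_frobeniusAlgEquivOfAlgebraic_iterate K L k) z, ← AlgEquiv.coe_pow,
    Algebra.trace_eq_of_algEquiv]

theorem pow_card_pow_finrank (x : L) : x ^ Fintype.card K ^ Module.finrank K L = x := by
  have := Module.finite_of_finite K (M := L)
  have := Fintype.ofFinite L
  rw [← Module.card_eq_pow_finrank, FiniteField.pow_card]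

theorem pow_card_pow_pow_card_pow_finrank_sub (i : Fin (Module.finrank K L)) (x : L) :
    (x ^ Fintype.card K ^ (i : ℕ)) ^ Fintype.card K ^ ((Module.finrank K L - i) % Module.finrank K L)
      = x := by
  rcases Nat.eq_zero_or_pos (i : ℕ) with hi | hi
  · simp [hi]
  · rw [Nat.mod_eq_of_lt (by omega), ← pow_mul, ← pow_add, Nat.add_sub_cancel' i.isLt.le,
      pow_card_pow_finrank]

theorem trace_qAdjEval_mul (c : Fin (Module.finrank K L) → L) (x y : L) :
    Algebra.trace K L (qAdjEval (Fintype.card K) c x * y)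
      = Algebra.trace K L (x * qEval (Fintype.card K) c y) := by
  rw [qAdjEval, qEval, Finset.sum_mul, Finset.mul_sum, map_sum, map_sum]
  refine Finset.sum_congr rfl fun i _ => ?_
  set j := (Module.finrank K L - i) % Module.finrank K L
  calc Algebra.trace K L (c i ^ Fintype.card K ^ j * x ^ Fintype.card K ^ j * y)
      = Algebra.trace K L ((x * (c i * y ^ Fintype.card K ^ (i : ℕ))) ^ Fintype.card K ^ j) := by
        rw [mul_pow, mul_pow, pow_card_pow_pow_card_pow_finrank_sub]
        ring_nf
    _ = Algebra.trace K L (x * (c i * y ^ Fintype.card K ^ (i : ℕ))) := trace_pow_card_pow j _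

end FiniteExtension

theorem eq_of_forall_trace_mul_eq {K L : Type*} [Field K] [Field L] [Algebra K L]
    [FiniteDimensional K L] [Algebra.IsSeparable K L] {a b : L}
    (h : ∀ y, Algebra.trace K L (a * y) = Algebra.trace K L (b * y)) : a = b :=
  sub_eq_zero.mp <| (traceForm_nondegenerate K L).1 _ fun y => by
    rw [Algebra.traceForm_apply, sub_mul, map_sub, h, sub_self]

theorem stmt_5_general (q m : ℕ)
    (K L : Type*) [Field K] [Field L] [Algebra K L] [Fintype K] [FiniteDimensional K L]
    (hq : Fintype.card K = q) (hm' : Module.finrank K L = m)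
    (p p' r : Fin m → L)
    (hr : ∀ x : L, qEval q r x = qEval q p (qEval q p' x)) :
    ∀ x : L, qAdjEval q r x = qAdjEval q p' (qAdjEval q p x) := by
  subst hq hm'
  intro x
  refine eq_of_forall_trace_mul_eq (K := K) fun y => ?_
  rw [trace_qAdjEval_mul, hr, ← trace_qAdjEval_mul, ← trace_qAdjEval_mul]

/-- Adjunction on q-polynomials modulo `X^{q^m} - X` is anti-multiplicative:
`(P ∘ Q)^* = Q^* ∘ P^*` modulo `X^{q^m} - X` (i.e. as induced maps on `F_{q^m}`). -/
theorem stmt_5 (q m : ℕ) (hm : 0 < m)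
    (K L : Type*) [Field K] [Field L] [Algebra K L] [Fintype K] [FiniteDimensional K L]
    (hq : Fintype.card K = q) (hm' : Module.finrank K L = m)
    (p p' r : Fin m → L)
    (hr : ∀ x : L, qEval q r x = qEval q p (qEval q p' x)) :
    ∀ x : L, qAdjEval q r x = qAdjEval q p' (qAdjEval q p x) :=
  stmt_5_general q m K L hq hm' p p' r hr
end

section
/- Suppose Y = C + E where C is a q-polynomial of q-degree < k over F_{q^m} and E is a q-polynomial of rank t ≤ floor((n-k)/2), with n = m. If (V, N) is a nonzero pair with V a q-polynomial of q-degree ≤ t and N of q-degree ≤ k + t - 1 satisfying Y ∘ V ≡ N mod (X^{q^m}-X), then N = C ∘ V. -/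
/-- Suppose `Y = C + E` with `C` a q-polynomial of q-degree `< k` and `E` of rank
`t ≤ ⌊(n-k)/2⌋` (n = m). If `(V, N)` is a nonzero pair, `deg_q V ≤ t`,
`deg_q N ≤ k + t - 1`, with `Y ∘ V ≡ N mod (X^{q^m} - X)`, then `N = C ∘ V`. -/
theorem stmt_13 (q m k t : ℕ) (hm : 0 < m) (hk : 0 < k) (hkm : k ≤ m)
    (ht : t ≤ (m - k) / 2)
    (K L : Type*) [Field K] [Field L] [Algebra K L] [Fintype K] [FiniteDimensional K L]
    (hq : Fintype.card K = q) (hm' : Module.finrank K L = m)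
    (C E V N : Polynomial L)
    (hC : IsQPoly q C) (hCdeg : C.natDegree ≤ q ^ (k - 1))
    (hE : IsQPoly q E)
    (φE : L →ₗ[K] L) (hφE : ∀ x : L, φE x = E.eval x)
    (hrank : Module.finrank K (LinearMap.range φE) = t)
    (hV : IsQPoly q V) (hVdeg : V.natDegree ≤ q ^ t)
    (hN : IsQPoly q N) (hNdeg : N.natDegree ≤ q ^ (k + t - 1))
    (hnz : ¬(V = 0 ∧ N = 0))
    (hcong : ∀ x : L, ((C + E).comp V).eval x = N.eval x) :
    N = C.comp V := by
  classical
  obtain ⟨p, hp⟩ := CharP.exists K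
  haveI := hp
  obtain ⟨s, hps, hcard⟩ := FiniteField.card K p
  haveI : Fact p.Prime := ⟨hps⟩
  haveI : CharP L p := charP_of_injective_algebraMap (algebraMap K L).injective p
  have hq2 : 2 ≤ q := by
    rw [← hq]; exact Fintype.one_lt_card
  -- evaluation of a q-polynomial is additive
  have keyadd : ∀ (P : Polynomial L), IsQPoly q P →
      ∀ x y : L, P.eval (x + y) = P.eval x + P.eval y := by
    intro P hP x y
    rw [Polynomial.eval_eq_sum, Polynomial.eval_eq_sum, Polynomial.eval_eq_sum,
      Polynomial.sum_def, Polynomial.sum_def, Polynomial.sum_def, ← Finset.sum_add_distrib]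
    refine Finset.sum_congr rfl fun n hn => ?_
    obtain ⟨i, rfl⟩ := hP n hn
    have hqi : q ^ i = p ^ ((s : ℕ) * i) := by rw [pow_mul, ← hcard, hq]
    rw [hqi, add_pow_char_pow, mul_add]
  -- evaluation of a q-polynomial commutes with scalars
  have keysmul : ∀ (P : Polynomial L), IsQPoly q P →
      ∀ (c : K) (x : L), P.eval (algebraMap K L c * x) = algebraMap K L c * P.eval x := by
    intro P hP c x
    rw [Polynomial.eval_eq_sum, Polynomial.eval_eq_sum,
      Polynomial.sum_def, Polynomial.sum_def, Finset.mul_sum]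
    refine Finset.sum_congr rfl fun n hn => ?_
    obtain ⟨i, rfl⟩ := hP n hn
    have hc : c ^ q ^ i = c := by rw [← hq]; exact FiniteField.pow_card_pow i c
    rw [mul_pow, ← map_pow, hc]
    ring
  -- the K-linear map induced by V
  let Vlin : L →ₗ[K] L :=
    { toFun := fun x => V.eval x
      map_add' := keyadd V hV
      map_smul' := by
        intro c x
        simp only [RingHom.id_apply, Algebra.smul_def]
        exact keysmul V hV c x }
  let ψ := φE.comp Vlin
  have hker : m - t ≤ Module.finrank K (LinearMap.ker ψ) := by
    have h1 : Module.finrank K (LinearMap.range ψ) ≤ t := by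
      rw [← hrank]
      exact Submodule.finrank_mono (LinearMap.range_comp_le_range Vlin φE)
    have h2 := LinearMap.finrank_range_add_finrank_ker ψ
    rw [hm'] at h2
    omega
  set R := C.comp V - N with hRdef
  have hRroot : ∀ x ∈ LinearMap.ker ψ, R.eval x = 0 := by
    intro x hx
    have hx' : E.eval (V.eval x) = 0 := by
      have h0 := LinearMap.mem_ker.mp hx
      have : φE (Vlin x) = 0 := h0
      rwa [hφE] at this
    have h := hcong x
    rw [Polynomial.eval_comp, Polynomial.eval_add] at h
    rw [hRdef, Polynomial.eval_sub, Polynomial.eval_comp]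
    rw [hx', add_zero] at h
    rw [h, sub_self]
  by_contra hne
  have hRne : R ≠ 0 := sub_ne_zero.mpr fun h => hne h.symm
  haveI : Finite L := Module.finite_of_finite K
  haveI : Fintype L := Fintype.ofFinite L
  have hcardker : Fintype.card (LinearMap.ker ψ) = q ^ Module.finrank K (LinearMap.ker ψ) := by
    rw [← hq]; exact Module.card_eq_pow_finrank
  have hle : Fintype.card (LinearMap.ker ψ) ≤ R.natDegree := by
    have hsub : ((LinearMap.ker ψ : Set L)).toFinset ⊆ R.roots.toFinset := by
      intro x hx
      rw [Set.mem_toFinset] at hx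
      rw [Multiset.mem_toFinset, Polynomial.mem_roots hRne]
      exact hRroot x hx
    calc Fintype.card (LinearMap.ker ψ)
        = ((LinearMap.ker ψ : Set L)).toFinset.card := (Set.toFinset_card _).symm
      _ ≤ R.roots.toFinset.card := Finset.card_le_card hsub
      _ ≤ Multiset.card R.roots := Multiset.toFinset_card_le _
      _ ≤ R.natDegree := by
          have := Polynomial.card_roots' R
          exact this
  have hRdeg : R.natDegree ≤ q ^ (k + t - 1) := by
    have h1 : (C.comp V).natDegree ≤ q ^ (k + t - 1) := by
      calc (C.comp V).natDegree ≤ C.natDegree * V.natDegree := Polynomial.natDegree_comp_le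
        _ ≤ q ^ (k - 1) * q ^ t := Nat.mul_le_mul hCdeg hVdeg
        _ = q ^ (k + t - 1) := by rw [← pow_add]; congr 1; omega
    calc R.natDegree ≤ max (C.comp V).natDegree N.natDegree := Polynomial.natDegree_sub_le _ _
      _ ≤ q ^ (k + t - 1) := max_le h1 hNdeg
  -- contradiction: q^(m-t) ≤ card ker ≤ natDegree R ≤ q^(k+t-1) < q^(m-t)
  have h2t : 2 * t ≤ m - k := by
    have := Nat.div_mul_le_self (m - k) 2
    omega
  have hlt : k + t - 1 < m - t := by omega
  have hbig : q ^ (m - t) ≤ Fintype.card (LinearMap.ker ψ) := by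
    rw [hcardker]
    exact Nat.pow_le_pow_right (by omega) hker
  have hsmall : q ^ (k + t - 1) < q ^ (m - t) :=
    Nat.pow_lt_pow_right (by omega) hlt
  omega
end

section
/- Let T be an F_{q^m}-subspace of q-polynomials mod (X^{q^m}-X), let C = L_{<k} ⊕ T be a supercode of the Gabidulin code L_{<k}, and let Y = C₀ + E with C₀ ∈ C and E a q-polynomial of rank t. Assume (L_{<k+t} + L_{≤t} ∘ T) ∩ (L_{≤t} ∘ E) = {0}. Then any nonzero solution (Λ, N) with Λ ∈ L_{≤t}, N ∈ L_{<k+t} + L_{≤t} ∘ T, and Λ ∘ Y ≡ N mod (X^{q^m}-X), satisfies Λ ∘ E ≡ 0 mod (X^{q^m}-X). -/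
/-- The space `L_{<k}` of (classes mod `X^{q^m}-X` of) q-polynomials of q-degree `< k`,
viewed as the `F_{q^m}`-span of the maps `x ↦ x^{q^i}`, `i < k`, inside `L → L`. -/
def qPolySpace (q k : ℕ) (L : Type*) [Field L] : Submodule L (L → L) :=
  Submodule.span L {f : L → L | ∃ i < k, f = fun x => x ^ q ^ i}

/-- The composition `A ∘ B` of two spaces of (classes of) q-polynomials: the
`F_{q^m}`-span of all compositions `P ∘ Q`, `P ∈ A`, `Q ∈ B`. -/
def compSpan (L : Type*) [Field L] (A B : Submodule L (L → L)) : Submodule L (L → L) :=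
  Submodule.span L {f : L → L | ∃ g ∈ A, ∃ h ∈ B, f = g ∘ h}

/-- Members of `qPolySpace` are additive, given that raising to `q^i` powers is additive. -/
lemma qPoly_additive {L : Type*} [Field L] {q k : ℕ}
    (hq : ∀ (i : ℕ) (a b : L), (a + b) ^ q ^ i = a ^ q ^ i + b ^ q ^ i)
    {f : L → L} (hf : f ∈ qPolySpace q k L) (a b : L) :
    f (a + b) = f a + f b := by
  induction hf using Submodule.span_induction with
  | mem g hg =>
    obtain ⟨i, _, rfl⟩ := hg
    exact hq i a b
  | zero => simp
  | add g h _ _ hg hh =>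
    simp only [Pi.add_apply, hg, hh]
    ring
  | smul c g _ hg => simp [Pi.smul_apply, hg, mul_add]

/-- Raising a member of `qPolySpace q k` to the `q^i` power, `i ≤ t`, lands in
`qPolySpace q (k+t)`. -/
lemma qPoly_pow_mem {L : Type*} [Field L] {q k : ℕ} (hq0 : q ≠ 0)
    (hq : ∀ (i : ℕ) (a b : L), (a + b) ^ q ^ i = a ^ q ^ i + b ^ q ^ i)
    {f : L → L} (hf : f ∈ qPolySpace q k L) {i t : ℕ} (hi : i ≤ t) :
    (fun x => (f x) ^ q ^ i) ∈ qPolySpace q (k + t) L := by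
  induction hf using Submodule.span_induction with
  | mem g hg =>
    obtain ⟨j, hj, rfl⟩ := hg
    apply Submodule.subset_span
    refine ⟨j + i, by omega, ?_⟩
    funext x
    rw [← pow_mul, ← pow_add]
  | zero =>
    have : (fun x : L => (0 : L) ^ q ^ i) = 0 := by
      funext x
      exact zero_pow (pow_ne_zero _ hq0)
    simp only [Pi.zero_apply]
    rw [this]
    exact (qPolySpace q (k + t) L).zero_mem
  | add g h _ _ hg hh =>
    have : (fun x => ((g + h) x) ^ q ^ i) =
        (fun x => (g x) ^ q ^ i) + fun x => (h x) ^ q ^ i := by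
      funext x
      exact hq i (g x) (h x)
    rw [this]
    exact Submodule.add_mem _ hg hh
  | smul c g _ hg =>
    have : (fun x => ((c • g) x) ^ q ^ i) = (c ^ q ^ i) • fun x => (g x) ^ q ^ i := by
      funext x
      simp [mul_pow]
    rw [this]
    exact Submodule.smul_mem _ _ hg

/-- Composition `Λ ∘ P` with `Λ ∈ L_{≤t}`, `P ∈ L_{<k}` lies in `L_{<k+t}`. -/
lemma qPoly_comp_mem {L : Type*} [Field L] {q k t : ℕ} (hq0 : q ≠ 0)
    (hq : ∀ (i : ℕ) (a b : L), (a + b) ^ q ^ i = a ^ q ^ i + b ^ q ^ i)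
    {Λ P : L → L} (hΛ : Λ ∈ qPolySpace q (t + 1) L) (hP : P ∈ qPolySpace q k L) :
    (fun x => Λ (P x)) ∈ qPolySpace q (k + t) L := by
  induction hΛ using Submodule.span_induction with
  | mem g hg =>
    obtain ⟨i, hi, rfl⟩ := hg
    exact qPoly_pow_mem hq0 hq hP (by omega)
  | zero => exact (qPolySpace q (k + t) L).zero_mem
  | add g h _ _ hg hh => exact Submodule.add_mem _ hg hh
  | smul c g _ hg => exact Submodule.smul_mem _ _ hg


/-- Decoding supercodes of Gabidulin codes: with `C = L_{<k} ⊕ T` and `Y = C₀ + E`,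
`C₀ ∈ C`, `E` of rank `t`, if `(L_{<k+t} + L_{≤t} ∘ T) ∩ (L_{≤t} ∘ E) = {0}`, then any
nonzero solution `(Λ, N)`, `Λ ∈ L_{≤t}`, `N ∈ L_{<k+t} + L_{≤t} ∘ T`, of
`Λ ∘ Y ≡ N mod (X^{q^m}-X)` satisfies `Λ ∘ E ≡ 0 mod (X^{q^m}-X)`. -/
theorem stmt_15 (q m k t : ℕ) (hm : 0 < m) (hk : 0 < k)
    (K L : Type*) [Field K] [Field L] [Algebra K L] [Fintype K] [FiniteDimensional K L]
    (hq : Fintype.card K = q) (hm' : Module.finrank K L = m)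
    (T : Submodule L (L → L)) (hT : T ≤ qPolySpace q m L)
    (hdirect : Disjoint (qPolySpace q k L) T)
    (E : Polynomial L) (hE : IsQPoly q E) (hEdeg : E.natDegree < q ^ m)
    (φE : L →ₗ[K] L) (hφE : ∀ x : L, φE x = E.eval x)
    (hrank : Module.finrank K (LinearMap.range φE) = t)
    (C₀ : L → L) (hC₀ : C₀ ∈ qPolySpace q k L ⊔ T)
    (hinter : (qPolySpace q (k + t) L ⊔ compSpan L (qPolySpace q (t + 1) L) T) ⊓
        compSpan L (qPolySpace q (t + 1) L)
          (Submodule.span L {fun x : L => E.eval x}) = ⊥)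
    (Λ N : L → L)
    (hΛ : Λ ∈ qPolySpace q (t + 1) L)
    (hN : N ∈ qPolySpace q (k + t) L ⊔ compSpan L (qPolySpace q (t + 1) L) T)
    (hnz : ¬(Λ = 0 ∧ N = 0))
    (hcong : ∀ x : L, Λ (C₀ x + E.eval x) = N x) :
    ∀ x : L, Λ (E.eval x) = 0 := by
  classical
  -- characteristic setup
  have hq0 : q ≠ 0 := by
    rw [← hq]
    exact Fintype.card_ne_zero
  set p := ringChar K with hpdef
  haveI : CharP K p := ringChar.charP K
  obtain ⟨n, hp, hcard⟩ := FiniteField.card K p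
  haveI : Fact p.Prime := ⟨hp⟩
  haveI : CharP L p := charP_of_injective_algebraMap (algebraMap K L).injective p
  have hqp : q = p ^ (n : ℕ) := by rw [← hq, hcard]
  have hadd : ∀ (i : ℕ) (a b : L), (a + b) ^ q ^ i = a ^ q ^ i + b ^ q ^ i := by
    intro i a b
    rw [hqp, ← pow_mul]
    rw [add_pow_char_pow]
  -- Λ is additive
  have hΛadd : ∀ a b : L, Λ (a + b) = Λ a + Λ b := qPoly_additive hadd hΛ
  -- decompose C₀
  obtain ⟨P, hP, Q, hQ, hPQ⟩ := Submodule.mem_sup.mp hC₀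
  -- the function Λ ∘ E lies in both spaces of the trivial intersection
  set F : L → L := fun x => Λ (E.eval x) with hF
  have hFeq : F = N - (fun x => Λ (P x)) - fun x => Λ (Q x) := by
    funext x
    have h1 : Λ (C₀ x + E.eval x) = Λ (P x) + Λ (Q x) + Λ (E.eval x) := by
      rw [← hPQ]
      simp only [Pi.add_apply] at *
      rw [hΛadd, hΛadd]
    have h2 := hcong x
    simp only [Pi.sub_apply]
    rw [h1] at h2
    show Λ (E.eval x) = N x - Λ (P x) - Λ (Q x)
    rw [← h2]
    ring
  have hmem1 : F ∈ qPolySpace q (k + t) L ⊔ compSpan L (qPolySpace q (t + 1) L) T := by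
    rw [hFeq]
    apply Submodule.sub_mem
    apply Submodule.sub_mem
    · exact hN
    · exact Submodule.mem_sup_left (qPoly_comp_mem hq0 hadd hΛ hP)
    · apply Submodule.mem_sup_right
      exact Submodule.subset_span ⟨Λ, hΛ, Q, hQ, rfl⟩
  have hmem2 : F ∈ compSpan L (qPolySpace q (t + 1) L)
      (Submodule.span L {fun x : L => E.eval x}) :=
    Submodule.subset_span ⟨Λ, hΛ, _, Submodule.mem_span_singleton_self _, rfl⟩
  have hF0 : F = 0 := by
    have : F ∈ (⊥ : Submodule L (L → L)) := hinter ▸ Submodule.mem_inf.mpr ⟨hmem1, hmem2⟩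
    simpa using this
  intro x
  have := congrFun hF0 x
  simpa [hF] using this
end

section
/- In the LIGA setting, with c' = (m + Tr(αx))·G + Tr(αz) where G generates a Gabidulin code 𝒢 of dimension k and length n, z has rank w < n - k, and β ∈ F_{q^{mu}}: the vector c' - Tr(β k_pub) lies in 𝒢 if and only if Tr((α - β) z) = 0, where k_pub = x·G + z. -/
/-- In the LIGA setting, with `c' = (m + Tr(αx))·G + Tr(αz)`, `k_pub = x·G + z`, `G`
generating a Gabidulin code `𝒢` of dimension `k`, length `n`, minimum rank distance
`n - k + 1`, and `z` of rank `w < n - k`: for `β ∈ F_{q^{mu}}`, the vector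
`c' - Tr(β k_pub)` lies in `𝒢` if and only if `Tr((α - β) z) = 0`. -/
theorem stmt_17 (q m u n k w : ℕ) (hm : 0 < m) (hu : 0 < u) (hk : 0 < k) (hkn : k < n)
    (K Lm Lb : Type*) [Field K] [Field Lm] [Field Lb]
    [Algebra K Lm] [Algebra Lm Lb] [Algebra K Lb] [IsScalarTower K Lm Lb]
    [Fintype K] [FiniteDimensional K Lm] [FiniteDimensional Lm Lb]
    (hq : Fintype.card K = q) (hm' : Module.finrank K Lm = m)
    (hu' : Module.finrank Lm Lb = u)
    (G : Matrix (Fin k) (Fin n) Lm)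
    (𝒢 : Submodule Lm (Fin n → Lm))
    (hspan : 𝒢 = Submodule.span Lm (Set.range fun i => G i))
    (hdist : ∀ c ∈ 𝒢, c ≠ 0 →
      n - k + 1 ≤ Module.finrank K (Submodule.span K (Set.range c)))
    (x : Fin k → Lb) (z : Fin n → Lb)
    (hw : Module.finrank K (Submodule.span K (Set.range z)) = w)
    (hwk : w < n - k)
    (α β : Lb) (mvec : Fin k → Lm) :
    ((fun j : Fin n =>
        ((∑ i, (mvec i + Algebra.trace Lm Lb (α * x i)) * G i j) +
            Algebra.trace Lm Lb (α * z j)) -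
          Algebra.trace Lm Lb (β * ((∑ i, x i * algebraMap Lm Lb (G i j)) + z j))) ∈ 𝒢) ↔
      (fun j : Fin n => Algebra.trace Lm Lb ((α - β) * z j)) = 0 := by
  classical
  set Tr := Algebra.trace Lm Lb with hTr
  set a : Fin k → Lm := fun i => mvec i + Tr (α * x i) - Tr (β * x i) with ha
  set v : Fin n → Lm := fun j => Tr ((α - β) * z j) with hv
  set c₀ : Fin n → Lm := ∑ i, a i • G i with hc0
  -- rewrite the big vector as c₀ + v
  have htr : ∀ j, Tr (β * ((∑ i, x i * algebraMap Lm Lb (G i j)) + z j)) =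
      (∑ i, Tr (β * x i) * G i j) + Tr (β * z j) := by
    intro j
    rw [mul_add, map_add, Finset.mul_sum, map_sum]
    congr 1
    refine Finset.sum_congr rfl fun i _ => ?_
    rw [show β * (x i * algebraMap Lm Lb (G i j)) = (G i j) • (β * x i) by
      rw [Algebra.smul_def]; ring, map_smul, smul_eq_mul, mul_comm]
  have heq : (fun j : Fin n =>
        ((∑ i, (mvec i + Tr (α * x i)) * G i j) + Tr (α * z j)) -
          Tr (β * ((∑ i, x i * algebraMap Lm Lb (G i j)) + z j))) = c₀ + v := by
    funext j
    simp only [hc0, Pi.add_apply, Finset.sum_apply, Pi.smul_apply, smul_eq_mul,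
      htr j, ha, hv]
    rw [show (α - β) * z j = α * z j - β * z j by ring, map_sub]
    simp only [sub_mul, Finset.sum_sub_distrib]
    ring
  have hc₀ : c₀ ∈ 𝒢 := by
    rw [hspan]
    exact Submodule.sum_mem _ fun i _ =>
      Submodule.smul_mem _ _ (Submodule.subset_span ⟨i, rfl⟩)
  rw [heq, Submodule.add_mem_iff_right _ hc₀]
  -- now v ∈ 𝒢 ↔ v = 0
  constructor
  · intro hvmem
    by_contra hne
    have hrank := hdist v hvmem hne
    -- rank bound on v
    let φ : Lb →ₗ[K] Lm :=
      ((Algebra.trace Lm Lb).restrictScalars K).comp (LinearMap.mulLeft K (α - β))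
    have hrange : Set.range v = φ '' Set.range z := by
      rw [← Set.range_comp]; rfl
    have hmap : Submodule.span K (Set.range v)
        = (Submodule.span K (Set.range z)).map φ := by
      rw [hrange, Submodule.map_span]
    have hfin : FiniteDimensional K (Submodule.span K (Set.range z)) :=
      FiniteDimensional.span_of_finite K (Set.finite_range z)
    have hle : Module.finrank K (Submodule.span K (Set.range v)) ≤ w := by
      rw [hmap, ← hw]
      exact Submodule.finrank_map_le φ _
    omega
  · intro h
    rw [show v = 0 from h]
    exact Submodule.zero_mem _
end
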